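/- arXiv:2510.08861 — 4 statements merged into one kernel-verified Lean document; each statement's English description precedes it below -/
import Mathlib

section
/- A functor F : A ⥤ B between categories is initial if and only if it is strictly left orthogonal to every discrete opfibration of categories; that is, F is initial if and only if for every discrete opfibration p : E ⥤ X and all functors t : A ⥤ E and s : B ⥤ X with F ⋙ s = t ⋙ p, there exists a unique functor d : B ⥤ E with F ⋙ d = t and d ⋙ p = s. -/
open CategoryTheory

universe u

/-- A functor `p : E ⥤ B` is a discrete opfibration if every morphism out of the image of an
object `e` has a unique lift with domain `e`. -/
def IsDiscreteOpfib {E : Type*} {B : Type*} [Category E] [Category B] (p : E ⥤ B) : Prop :=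
  ∀ ⦃e : E⦄ ⦃b : B⦄ (f : p.obj e ⟶ b),
    ∃! eg : Σ e' : E, e ⟶ e',
      ∃ h : p.obj eg.1 = b, p.map eg.2 ≫ eqToHom h = f

/-!
For a discrete opfibration `p : E ⥤ X`, unique lifting of morphisms makes the fibres
`{e // p.obj e = x}` into a functor `X ⥤ Type`, and a functor `d : B ⥤ E` over `s : B ⥤ X` is
the same thing as a section of `s ⋙ fiberFunctor`: `p` is faithful, so `d` is determined by its
objects, and the section condition is exactly what makes the lifts of `s.map f` compose. A
commutative square is then a section over `A` to be extended to a section over `B`, and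
restriction of sections along an initial functor is bijective.

Conversely, apply the lifting property to the discrete opfibration of elements of
`b ↦ π₀ (CostructuredArrow F b)` and the section `a ↦ [𝟙 (F.obj a)]` over `A`. The extended
section over `B` equals the component of every `j : CostructuredArrow F b`, since `j` is the
image of `𝟙 (F.obj j.left)` under `j.hom`; so each `CostructuredArrow F b` is connected.
-/

namespace IsDiscreteOpfib

variable {E X : Type*} [Category E] [Category X] {p : E ⥤ X}

theorem faithful (hp : IsDiscreteOpfib p) : p.Faithful where
  map_injective {e e'} g g' h := by
    have := (hp (p.map g)).unique (y₁ := ⟨e', g⟩) (y₂ := ⟨e', g'⟩)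
      ⟨rfl, by simp⟩ ⟨rfl, by simp [h]⟩
    exact eq_of_heq (Sigma.mk.inj this).2

theorem obj_eq_of_map_comp_eqToHom (hp : IsDiscreteOpfib p) {e e₁ e₂ : E} (g₁ : e ⟶ e₁)
    (g₂ : e ⟶ e₂) (h : p.obj e₁ = p.obj e₂) (hg : p.map g₁ ≫ eqToHom h = p.map g₂) : e₁ = e₂ :=
  congrArg Sigma.fst
    ((hp (p.map g₂)).unique (y₁ := ⟨e₁, g₁⟩) (y₂ := ⟨e₂, g₂⟩) ⟨h, hg⟩ ⟨rfl, by simp⟩)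

noncomputable def fiberMap (hp : IsDiscreteOpfib p) {x y : X} (f : x ⟶ y)
    (e : {e : E // p.obj e = x}) : {e : E // p.obj e = y} :=
  ⟨(hp (eqToHom e.2 ≫ f)).exists.choose.1, (hp (eqToHom e.2 ≫ f)).exists.choose_spec.fst⟩

theorem exists_hom_fiberMap (hp : IsDiscreteOpfib p) {x y : X} (f : x ⟶ y)
    (e : {e : E // p.obj e = x}) :
    ∃ g : e.1 ⟶ (hp.fiberMap f e).1, p.map g ≫ eqToHom (hp.fiberMap f e).2 = eqToHom e.2 ≫ f :=
  ⟨_, (hp (eqToHom e.2 ≫ f)).exists.choose_spec.snd⟩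

theorem fiberMap_eq (hp : IsDiscreteOpfib p) {x y : X} (f : x ⟶ y) (e : {e : E // p.obj e = x})
    (e' : {e : E // p.obj e = y}) (g : e.1 ⟶ e'.1)
    (hg : p.map g ≫ eqToHom e'.2 = eqToHom e.2 ≫ f) : hp.fiberMap f e = e' := by
  obtain ⟨g₁, hg₁⟩ := hp.exists_hom_fiberMap f e
  refine Subtype.ext (hp.obj_eq_of_map_comp_eqToHom g₁ g ((hp.fiberMap f e).2.trans e'.2.symm) ?_)
  rw [← eqToHom_trans (hp.fiberMap f e).2 e'.2.symm, ← Category.assoc, hg₁, ← hg]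
  simp

noncomputable def fiberFunctor (hp : IsDiscreteOpfib p) : X ⥤ Type _ where
  obj x := {e : E // p.obj e = x}
  map f := TypeCat.ofHom (hp.fiberMap f)
  map_id x := ConcreteCategory.hom_ext _ _ fun e => hp.fiberMap_eq (𝟙 x) e e (𝟙 e.1) (by simp)
  map_comp f g := ConcreteCategory.hom_ext _ _ fun e => by
    obtain ⟨g₁, hg₁⟩ := hp.exists_hom_fiberMap f e
    obtain ⟨g₂, hg₂⟩ := hp.exists_hom_fiberMap g (hp.fiberMap f e)
    refine hp.fiberMap_eq (f ≫ g) e (hp.fiberMap g (hp.fiberMap f e)) (g₁ ≫ g₂) ?_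
    rw [p.map_comp, Category.assoc, hg₂, ← Category.assoc, hg₁, Category.assoc]

theorem functor_ext (hp : IsDiscreteOpfib p) {B : Type*} [Category B] {d₁ d₂ : B ⥤ E}
    (h : d₁ ⋙ p = d₂ ⋙ p) (hobj : ∀ b, d₁.obj b = d₂.obj b) : d₁ = d₂ := by
  have := hp.faithful
  refine CategoryTheory.Functor.ext hobj fun b b' f => p.map_injective ?_
  rw [show p.map (d₁.map f) = _ from Functor.congr_hom h f]
  simp [eqToHom_map]

variable {B : Type*} [Category B] {s : B ⥤ X}

def sectionOfLift (hp : IsDiscreteOpfib p) (d : B ⥤ E) (hd : d ⋙ p = s) :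
    (s ⋙ hp.fiberFunctor).sections :=
  ⟨fun b => ⟨d.obj b, Functor.congr_obj hd b⟩, fun f =>
    hp.fiberMap_eq _ _ _ (d.map f) (by
      rw [show p.map (d.map f) = _ from Functor.congr_hom hd f]
      simp)⟩

noncomputable def liftOfSectionMap (hp : IsDiscreteOpfib p) (σ : (s ⋙ hp.fiberFunctor).sections)
    {b b' : B} (f : b ⟶ b') : (σ.val b).1 ⟶ (σ.val b').1 :=
  (hp.exists_hom_fiberMap (s.map f) (σ.val b)).choose ≫
    eqToHom (congrArg Subtype.val (σ.property f))

theorem map_liftOfSectionMap (hp : IsDiscreteOpfib p) (σ : (s ⋙ hp.fiberFunctor).sections)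
    {b b' : B} (f : b ⟶ b') :
    p.map (hp.liftOfSectionMap σ f) =
      eqToHom (σ.val b).2 ≫ s.map f ≫ eqToHom (σ.val b').2.symm := by
  rw [liftOfSectionMap, p.map_comp, eqToHom_map,
    (comp_eqToHom_iff _ _ _).mp (hp.exists_hom_fiberMap (s.map f) (σ.val b)).choose_spec]
  simp

noncomputable def liftOfSection (hp : IsDiscreteOpfib p) (σ : (s ⋙ hp.fiberFunctor).sections) :
    B ⥤ E where
  obj b := (σ.val b).1
  map f := hp.liftOfSectionMap σ f
  map_id b := by
    have := hp.faithful
    exact p.map_injective (by simp [map_liftOfSectionMap])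
  map_comp f g := by
    have := hp.faithful
    exact p.map_injective (by simp [map_liftOfSectionMap])

theorem liftOfSection_comp (hp : IsDiscreteOpfib p) (σ : (s ⋙ hp.fiberFunctor).sections) :
    hp.liftOfSection σ ⋙ p = s :=
  CategoryTheory.Functor.ext (fun b => (σ.val b).2) fun _ _ f => hp.map_liftOfSectionMap σ f

theorem existsUnique_lift_of_initial {A : Type*} [Category A] (F : A ⥤ B) [F.Initial]
    (hp : IsDiscreteOpfib p) {t : A ⥤ E} (hsq : F ⋙ s = t ⋙ p) :
    ∃! d : B ⥤ E, F ⋙ d = t ∧ d ⋙ p = s := by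
  have hbij := F.bijective_sectionsPrecomp (s ⋙ hp.fiberFunctor)
  obtain ⟨σ, hσ⟩ := hbij.2 (hp.sectionOfLift t hsq.symm)
  refine ⟨hp.liftOfSection σ, ⟨?_, hp.liftOfSection_comp σ⟩, fun d ⟨hFd, hd⟩ => ?_⟩
  · refine hp.functor_ext (by rw [Functor.assoc, hp.liftOfSection_comp, hsq]) fun a => ?_
    exact congrArg Subtype.val (congrFun (congrArg Subtype.val hσ) a)
  · refine hp.functor_ext (by rw [hd, hp.liftOfSection_comp]) fun b => ?_
    have hd_σ : hp.sectionOfLift d hd = σ := by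
      subst hFd
      exact hbij.1 hσ.symm
    exact congrArg Subtype.val (congrFun (congrArg Subtype.val hd_σ) b)

end IsDiscreteOpfib

namespace CategoryTheory.Functor

variable {A B : Type*} [Category A] [Category B]

def costructuredArrowComponents (F : A ⥤ B) : B ⥤ Type _ where
  obj b := ConnectedComponents (CostructuredArrow F b)
  map f := TypeCat.ofHom (CostructuredArrow.map f).mapConnectedComponents
  map_id b := ConcreteCategory.hom_ext _ _ fun j => by
    induction j using Quotient.inductionOn
    exact congrArg _ CostructuredArrow.map_id
  map_comp f g := ConcreteCategory.hom_ext _ _ fun j => by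
    induction j using Quotient.inductionOn
    exact congrArg _ CostructuredArrow.map_comp

theorem initial_of_surjective_sectionsPrecomp (F : A ⥤ B)
    (h : Function.Surjective (F.sectionsPrecomp (P := F.costructuredArrowComponents))) :
    F.Initial := by
  obtain ⟨σ, hσ⟩ := h ⟨fun a => ConnectedComponents.mk (CostructuredArrow.mk (𝟙 (F.obj a))),
    fun k => _root_.Quotient.sound (Zigzag.of_hom (CostructuredArrow.homMk k (by simp)))⟩
  have hcomp : ∀ {b} (j : CostructuredArrow F b), ConnectedComponents.mk j = σ.val b := by
    intro b j
    have hσa : σ.val (F.obj j.left) = ConnectedComponents.mk (CostructuredArrow.mk (𝟙 _)) :=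
      congrFun (congrArg Subtype.val hσ) j.left
    rw [← σ.property j.hom, hσa]
    change _ = ConnectedComponents.mk ((CostructuredArrow.map j.hom).obj (CostructuredArrow.mk _))
    rw [CostructuredArrow.map_mk, Category.id_comp, ← CostructuredArrow.eq_mk]
  refine ⟨fun b => ?_⟩
  have : Nonempty (CostructuredArrow F b) := ⟨(Quotient.exists_rep (σ.val b)).choose⟩
  exact zigzag_isConnected fun j₁ j₂ => _root_.Quotient.exact ((hcomp j₁).trans (hcomp j₂).symm)

end CategoryTheory.Functor

namespace CategoryTheory.CategoryOfElements

variable {A B : Type*} [Category A] [Category B]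

def ofSection (F : A ⥤ B) {P : B ⥤ Type*} (τ : (F ⋙ P).sections) : A ⥤ P.Elements where
  obj a := ⟨F.obj a, τ.val a⟩
  map k := ⟨F.map k, τ.property k⟩

theorem isDiscreteOpfib_π (P : B ⥤ Type*) : IsDiscreteOpfib (π P) := by
  intro e b f
  refine ⟨⟨⟨b, P.map f e.2⟩, ⟨f, rfl⟩⟩, ⟨rfl, Category.comp_id f⟩, ?_⟩
  rintro ⟨⟨b', y⟩, (g : e.1 ⟶ b'), hy⟩ ⟨hb, hg⟩
  change P.map g e.2 = y at hy
  change b' = b at hb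
  subst hy hb
  obtain rfl : g = f := (Category.comp_id g).symm.trans hg
  rfl

def sectionOfSplitting {P : B ⥤ Type*} (d : B ⥤ P.Elements) (hd : d ⋙ π P = 𝟭 B) : P.sections :=
  ⟨fun b => P.map (eqToHom (Functor.congr_obj hd b)) (d.obj b).2, fun {b b'} f => by
    have key : ∀ (x y : P.Elements) (g : x ⟶ y) (hx : x.1 = b) (hy : y.1 = b'),
        g.val = eqToHom hx ≫ f ≫ eqToHom hy.symm →
          P.map f (P.map (eqToHom hx) x.2) = P.map (eqToHom hy) y.2 := by
      rintro ⟨x, x'⟩ ⟨y, y'⟩ ⟨g, hg⟩ (rfl : x = b) (rfl : y = b') h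
      change g = eqToHom rfl ≫ f ≫ eqToHom rfl at h
      simp only [eqToHom_refl, Category.id_comp, Category.comp_id] at h
      subst h
      simpa using hg
    exact key _ _ (d.map f) _ _ (Functor.congr_hom hd f)⟩

theorem sectionsPrecomp_sectionOfSplitting (F : A ⥤ B) {P : B ⥤ Type*} (τ : (F ⋙ P).sections)
    (d : B ⥤ P.Elements) (hd : d ⋙ π P = 𝟭 B) (hFd : F ⋙ d = ofSection F τ) :
    F.sectionsPrecomp (sectionOfSplitting d hd) = τ := by
  refine Subtype.ext (funext fun a => ?_)
  have key : ∀ (x : P.Elements) (_ : x = ⟨F.obj a, τ.val a⟩) (h : x.1 = F.obj a),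
      P.map (eqToHom h) x.2 = τ.val a := by
    rintro x rfl h
    simp
  exact key _ (Functor.congr_obj hFd a) _

end CategoryTheory.CategoryOfElements

/-- A functor is initial if and only if it is strictly left orthogonal to every discrete
opfibration of categories. -/
theorem initial_iff_strictly_left_orthogonal_to_discrete_opfibrations
    {A B : Type u} [Category.{u} A] [Category.{u} B] (F : A ⥤ B) :
    F.Initial ↔
      ∀ (E X : Type u) [Category.{u} E] [Category.{u} X] (p : E ⥤ X),
        IsDiscreteOpfib p →
          ∀ (t : A ⥤ E) (s : B ⥤ X), F ⋙ s = t ⋙ p →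
            ∃! d : B ⥤ E, F ⋙ d = t ∧ d ⋙ p = s := by
  refine ⟨fun _ E X _ _ p hp t s hsq => hp.existsUnique_lift_of_initial F hsq, fun H => ?_⟩
  refine F.initial_of_surjective_sectionsPrecomp fun τ => ?_
  obtain ⟨d, ⟨hFd, hd⟩, -⟩ := H _ B _ (CategoryOfElements.isDiscreteOpfib_π _)
    (CategoryOfElements.ofSection F τ) (𝟭 B) rfl
  exact ⟨_, CategoryOfElements.sectionsPrecomp_sectionOfSplitting F τ d hd hFd⟩
end

section
/- Every functor F : A ⥤ B between categories admits a comprehensive factorization: there exist a category E, an initial functor I : A ⥤ E, and a discrete opfibration P : E ⥤ B such that I ⋙ P = F. -/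
/-!
Factor `F` through the category of elements of `b ↦ π₀(F/b)`, the connected components of the
comma categories `CostructuredArrow F b`, sending `a` to `(F a, [𝟙])`. The projection from a
category of elements is always a discrete opfibration. Over an element `(b, x)`, the comma
category of the first functor is isomorphic to the component `x` of `F/b`, hence connected.
-/

open CategoryTheory

universe v₁ v₂ u₁ u₂ u

theorem isDiscreteOpfib_π {B : Type*} [Category B] (G : B ⥤ Type*) :
    IsDiscreteOpfib (CategoryOfElements.π G) := by
  intro e b f
  refine ⟨⟨⟨b, G.map f e.2⟩, ⟨f, rfl⟩⟩, ⟨rfl, Category.comp_id f⟩, ?_⟩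
  rintro ⟨⟨b', y⟩, g⟩ ⟨hb : b' = b, hgf⟩
  subst hb
  replace hgf : g.1 = f := (Category.comp_id _).symm.trans hgf
  obtain rfl : y = G.map f e.2 := hgf ▸ g.2.symm
  exact Sigma.ext rfl (heq_of_eq (Subtype.ext hgf))

section

variable {A : Type u₁} {B : Type u₂} [Category.{v₁} A] [Category.{v₂} B] (F : A ⥤ B)

abbrev costructuredArrowComponents : B ⥤ Type (max u₁ v₂) :=
  CostructuredArrow.functor F ⋙ Cat.connectedComponents

lemma costructuredArrowComponents_map_mk_id {a : A} {b : B} (f : F.obj a ⟶ b) :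
    (costructuredArrowComponents F).map f (.mk (.mk (𝟙 (F.obj a)))) = .mk (.mk f) := by
  show Quotient.mk _ ((CostructuredArrow.map f).obj (.mk (𝟙 (F.obj a)))) = _
  rw [CostructuredArrow.map_mk, Category.id_comp]
  rfl

def toComponentElements : A ⥤ (costructuredArrowComponents F).Elements where
  obj a := ⟨F.obj a, .mk (.mk (𝟙 (F.obj a)))⟩
  map φ := ⟨F.map φ, (costructuredArrowComponents_map_mk_id F _).trans
    (Quotient.sound (Zigzag.of_hom (CostructuredArrow.homMk φ)))⟩

namespace toComponentElements

variable {F} (b : B) (x : ConnectedComponents (CostructuredArrow F b))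

def costructuredArrowToComponent :
    CostructuredArrow (toComponentElements F) ((costructuredArrowComponents F).elementsMk b x) ⥤
      x.Component where
  obj w := ⟨.mk w.hom.1, (costructuredArrowComponents_map_mk_id F _).symm.trans w.hom.2⟩
  map g := ObjectProperty.homMk (CostructuredArrow.homMk g.left
    (congrArg Subtype.val (CostructuredArrow.w g)))

instance : (costructuredArrowToComponent b x).Faithful where
  map_injective h := by
    ext
    exact congrArg (fun g => g.hom.left) h

instance : (costructuredArrowToComponent b x).Full where
  map_surjective g :=
    ⟨CostructuredArrow.homMk g.hom.left (Subtype.ext (CostructuredArrow.w g.hom)), rfl⟩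

instance : (costructuredArrowToComponent b x).EssSurj where
  mem_essImage z :=
    ⟨CostructuredArrow.mk (Y := z.obj.left)
      ⟨z.obj.hom, (costructuredArrowComponents_map_mk_id F _).trans z.property⟩, ⟨Iso.refl _⟩⟩

theorem isConnected_costructuredArrow : IsConnected
    (CostructuredArrow (toComponentElements F) ((costructuredArrowComponents F).elementsMk b x)) :=
  have : (costructuredArrowToComponent b x).IsEquivalence := {}
  isConnected_of_equivalent (costructuredArrowToComponent b x).asEquivalence.symm

end toComponentElements

instance initial_toComponentElements : (toComponentElements F).Initial :=
  ⟨fun e => toComponentElements.isConnected_costructuredArrow e.1 e.2⟩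

end

/-- Every functor admits a comprehensive factorization: an initial functor followed by a
discrete opfibration. -/
theorem comprehensive_factorization
    {A B : Type u} [Category.{u} A] [Category.{u} B] (F : A ⥤ B) :
    ∃ (E : Cat.{u, u}) (I : A ⥤ E) (P : E ⥤ B),
      I.Initial ∧ IsDiscreteOpfib P ∧ I ⋙ P = F :=
  ⟨Cat.of (costructuredArrowComponents F).Elements, toComponentElements F,
    CategoryOfElements.π _, initial_toComponentElements F, isDiscreteOpfib_π _, rfl⟩
end

section
/- For every profunctor K from a category C to a category D, the category of instances of K is equivalent to the functor category Coll(K) ⥤ Type, where Coll(K) is the collage of K. -/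
open CategoryTheory Opposite

universe u

variable {C D : Type u} [Category.{u} C] [Category.{u} D]

/-- The objects of the collage of a profunctor `K` from `C` to `D`: the disjoint union of the
objects of `C` and of `D`. -/
def Collage (K : Cᵒᵖ × D ⥤ Type u) : Type u := C ⊕ D

/-- The hom-sets of the collage of `K`. -/
def CollageHom (K : Cᵒᵖ × D ⥤ Type u) : Collage K → Collage K → Type u
  | Sum.inl c, Sum.inl c' => c ⟶ c'
  | Sum.inl c, Sum.inr d => K.obj (op c, d)
  | Sum.inr _, Sum.inl _ => PEmpty
  | Sum.inr d, Sum.inr d' => d ⟶ d'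

/-- Identities in the collage. -/
def collageId (K : Cᵒᵖ × D ⥤ Type u) : ∀ x : Collage K, CollageHom K x x
  | Sum.inl c => (𝟙 c : c ⟶ c)
  | Sum.inr d => (𝟙 d : d ⟶ d)

/-- Composition in the collage, given by composition in `C` and `D` and the two-sided action
of `C` and `D` on `K`. -/
def collageComp (K : Cᵒᵖ × D ⥤ Type u) :
    ∀ {x y z : Collage K}, CollageHom K x y → CollageHom K y z → CollageHom K x z
  | Sum.inl _, Sum.inl _, Sum.inl _, f, g => (f ≫ g : _ ⟶ _)
  | Sum.inl c, Sum.inl c', Sum.inr d, f, k =>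
      (K.map (X := (op c', d)) (Y := (op c, d)) (Quiver.Hom.op (f : c ⟶ c'), 𝟙 d) k : K.obj (op c, d))
  | Sum.inl c, Sum.inr d, Sum.inr d', k, g =>
      (K.map (X := (op c, d)) (Y := (op c, d')) (𝟙 (op c), (g : d ⟶ d')) k : K.obj (op c, d'))
  | Sum.inl _, Sum.inr _, Sum.inl _, _, g => (g : PEmpty).elim
  | Sum.inr _, Sum.inl _, _, f, _ => (f : PEmpty).elim
  | Sum.inr _, Sum.inr _, Sum.inl _, _, g => (g : PEmpty).elim
  | Sum.inr _, Sum.inr _, Sum.inr _, f, g => (f ≫ g : _ ⟶ _)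

theorem collage_id_comp (K : Cᵒᵖ × D ⥤ Type u) :
    ∀ {x y : Collage K} (f : CollageHom K x y),
      collageComp K (collageId K x) f = f
  | Sum.inl _, Sum.inl _, f => Category.id_comp f
  | Sum.inl c, Sum.inr d, k => by
      show K.map (𝟙 (op c, d)) k = k
      exact FunctorToTypes.map_id_apply K k
  | Sum.inr _, Sum.inl _, f => (f : PEmpty).elim
  | Sum.inr _, Sum.inr _, f => Category.id_comp f

theorem collage_comp_id (K : Cᵒᵖ × D ⥤ Type u) :
    ∀ {x y : Collage K} (f : CollageHom K x y),
      collageComp K f (collageId K y) = f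
  | Sum.inl _, Sum.inl _, f => Category.comp_id f
  | Sum.inl c, Sum.inr d, k => by
      show K.map (𝟙 (op c, d)) k = k
      exact FunctorToTypes.map_id_apply K k
  | Sum.inr _, Sum.inl _, f => (f : PEmpty).elim
  | Sum.inr _, Sum.inr _, f => Category.comp_id f

theorem collage_assoc (K : Cᵒᵖ × D ⥤ Type u) :
    ∀ {w x y z : Collage K} (f : CollageHom K w x) (g : CollageHom K x y)
      (h : CollageHom K y z),
      collageComp K (collageComp K f g) h = collageComp K f (collageComp K g h)
  | Sum.inl _, Sum.inl _, Sum.inl _, Sum.inl _, f, g, h => Category.assoc f g h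
  | Sum.inl c₁, Sum.inl c₂, Sum.inl c₃, Sum.inr d, f, g, k => by
      have key : ∀ (f : c₁ ⟶ c₂) (g : c₂ ⟶ c₃) (k : K.obj (op c₃, d)),
          K.map ((Quiver.Hom.op (f ≫ g), 𝟙 d) : (op c₃, d) ⟶ (op c₁, d)) k =
            K.map ((Quiver.Hom.op f, 𝟙 d) : (op c₂, d) ⟶ (op c₁, d))
              (K.map ((Quiver.Hom.op g, 𝟙 d) : (op c₃, d) ⟶ (op c₂, d)) k) := by
        intro f g k
        rw [← FunctorToTypes.map_comp_apply]
        refine congrArg (fun m => K.map m k) ?_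
        apply Prod.ext
        · exact op_comp
        · exact (Category.comp_id _).symm
      exact key f g k
  | Sum.inl _, Sum.inl _, Sum.inr _, Sum.inl _, _, _, h => (h : PEmpty).elim
  | Sum.inl c₁, Sum.inl c₂, Sum.inr d₁, Sum.inr d₂, f, k, g => by
      have key : ∀ (f : c₁ ⟶ c₂) (g : d₁ ⟶ d₂) (k : K.obj (op c₂, d₁)),
          K.map ((𝟙 (op c₁), g) : (op c₁, d₁) ⟶ (op c₁, d₂))
            (K.map ((Quiver.Hom.op f, 𝟙 d₁) : (op c₂, d₁) ⟶ (op c₁, d₁)) k) =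
          K.map ((Quiver.Hom.op f, 𝟙 d₂) : (op c₂, d₂) ⟶ (op c₁, d₂))
            (K.map ((𝟙 (op c₂), g) : (op c₂, d₁) ⟶ (op c₂, d₂)) k) := by
        intro f g k
        rw [← FunctorToTypes.map_comp_apply, ← FunctorToTypes.map_comp_apply]
        refine congrArg (fun m => K.map m k) ?_
        apply Prod.ext <;> simp
      exact key f g k
  | Sum.inl _, Sum.inr _, Sum.inl _, _, _, g, _ => (g : PEmpty).elim
  | Sum.inl _, Sum.inr _, Sum.inr _, Sum.inl _, _, _, h => (h : PEmpty).elim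
  | Sum.inl c, Sum.inr d₁, Sum.inr d₂, Sum.inr d₃, k, g, h => by
      have key : ∀ (g : d₁ ⟶ d₂) (h : d₂ ⟶ d₃) (k : K.obj (op c, d₁)),
          K.map ((𝟙 (op c), h) : (op c, d₂) ⟶ (op c, d₃))
            (K.map ((𝟙 (op c), g) : (op c, d₁) ⟶ (op c, d₂)) k) =
          K.map ((𝟙 (op c), g ≫ h) : (op c, d₁) ⟶ (op c, d₃)) k := by
        intro g h k
        rw [← FunctorToTypes.map_comp_apply]
        refine congrArg (fun m => K.map m k) ?_
        apply Prod.ext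
        · exact Category.id_comp _
        · rfl
      exact key g h k
  | Sum.inr _, Sum.inl _, _, _, f, _, _ => (f : PEmpty).elim
  | Sum.inr _, Sum.inr _, Sum.inl _, _, _, g, _ => (g : PEmpty).elim
  | Sum.inr _, Sum.inr _, Sum.inr _, Sum.inl _, _, _, h => (h : PEmpty).elim
  | Sum.inr _, Sum.inr _, Sum.inr _, Sum.inr _, f, g, h => Category.assoc f g h

/-- The collage of a profunctor `K` from `C` to `D`. -/
instance collageCategory (K : Cᵒᵖ × D ⥤ Type u) : Category.{u} (Collage K) where
  Hom x y := CollageHom K x y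
  id x := collageId K x
  comp f g := collageComp K f g
  id_comp f := collage_id_comp K f
  comp_id f := collage_comp_id K f
  assoc f g h := collage_assoc K f g h

/-- An instance of a profunctor `K` from `C` to `D`: copresheaves `X` on `C` and `Y` on `D`
together with an action `X.obj c → K(c,d) → Y.obj d` compatible with the actions of `C` and
`D` on `K`. -/
structure ProfInstance (K : Cᵒᵖ × D ⥤ Type u) where
  X : C ⥤ Type u
  Y : D ⥤ Type u
  act : ∀ {c : C} {d : D}, X.obj c → K.obj (op c, d) → Y.obj d
  act_map : ∀ {c : C} {d d' : D} (g : d ⟶ d') (x : X.obj c) (k : K.obj (op c, d)),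
    Y.map g (act x k) = act x (K.map (𝟙 (op c), g) k)
  map_act : ∀ {c c' : C} {d : D} (f : c ⟶ c') (x : X.obj c) (k : K.obj (op c', d)),
    act (X.map f x) k = act x (K.map (f.op, 𝟙 d) k)

/-- The category of instances of a profunctor `K`. -/
instance (K : Cᵒᵖ × D ⥤ Type u) : Category (ProfInstance K) where
  Hom I J := { μν : (I.X ⟶ J.X) × (I.Y ⟶ J.Y) //
      ∀ {c : C} {d : D} (x : I.X.obj c) (k : K.obj (op c, d)),
        μν.2.app d (I.act x k) = J.act (μν.1.app c x) k }
  id I := ⟨(𝟙 I.X, 𝟙 I.Y), fun _ _ => rfl⟩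
  comp {I J L} f g := ⟨(f.1.1 ≫ g.1.1, f.1.2 ≫ g.1.2), fun {c} {d} x k => by
    show g.1.2.app d (f.1.2.app d (I.act x k)) = L.act (g.1.1.app c (f.1.1.app c x)) k
    rw [f.2, g.2]⟩
  id_comp f := rfl
  comp_id f := rfl
  assoc f g h := rfl

/-!
A functor `F` on the collage is the same thing as its restrictions to `C` and `D` together with
the action `x ↦ F.map k x` of the heteromorphisms `k ∈ K(c,d)`; functoriality of `F` on the two
kinds of mixed composites `c' ⟶ c ⟶ d` and `c ⟶ d ⟶ d'` is exactly the pair of compatibility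
axioms of an instance. Passing from an instance to a functor and back is the identity on the
nose (by structure eta); the other round trip is the identity up to a case split on the objects
of the collage.
-/

namespace Collage

variable (K : Cᵒᵖ × D ⥤ Type u)

def inl : C ⥤ Collage K where
  obj := Sum.inl
  map {c c'} f := (f : CollageHom K (Sum.inl c) (Sum.inl c'))

def inr : D ⥤ Collage K where
  obj := Sum.inr
  map {d d'} g := (g : CollageHom K (Sum.inr d) (Sum.inr d'))

variable {K}

def hetHom {c : C} {d : D} (k : K.obj (op c, d)) : (inl K).obj c ⟶ (inr K).obj d := k

end Collage

namespace ProfInstance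

variable {K : Cᵒᵖ × D ⥤ Type u}

def toFunctor (I : ProfInstance K) : Collage K ⥤ Type u where
  obj
    | Sum.inl c => I.X.obj c
    | Sum.inr d => I.Y.obj d
  map {x y} f := match x, y, f with
    | Sum.inl _, Sum.inl _, f => I.X.map f
    | Sum.inl _, Sum.inr _, k => TypeCat.ofHom (I.act · k)
    | Sum.inr _, Sum.inl _, f => f.elim
    | Sum.inr _, Sum.inr _, g => I.Y.map g
  map_id
    | Sum.inl c => I.X.map_id c
    | Sum.inr d => I.Y.map_id d
  map_comp {x y z} f g := by
    match x, y, z, f, g with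
    | Sum.inl _, Sum.inl _, Sum.inl _, f, g => exact I.X.map_comp f g
    | Sum.inl _, Sum.inl _, Sum.inr _, f, k => ext x; exact (I.map_act f x k).symm
    | Sum.inl _, Sum.inr _, Sum.inr _, k, g => ext x; exact (I.act_map g x k).symm
    | Sum.inl _, Sum.inr _, Sum.inl _, _, g => exact g.elim
    | Sum.inr _, Sum.inl _, _, f, _ => exact f.elim
    | Sum.inr _, Sum.inr _, Sum.inl _, _, g => exact g.elim
    | Sum.inr _, Sum.inr _, Sum.inr _, f, g => exact I.Y.map_comp f g

def ofFunctor (F : Collage K ⥤ Type u) : ProfInstance K where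
  X := Collage.inl K ⋙ F
  Y := Collage.inr K ⋙ F
  act x k := F.map (Collage.hetHom k) x
  act_map g x k :=
    (Functor.map_comp_apply F (Collage.hetHom k) ((Collage.inr K).map g) x).symm
  map_act f x k :=
    (Functor.map_comp_apply F ((Collage.inl K).map f) (Collage.hetHom k) x).symm

def toFunctorOfFunctorIso (F : Collage K ⥤ Type u) : toFunctor (ofFunctor F) ≅ F :=
  NatIso.ofComponents
    (fun | Sum.inl _ => Iso.refl _ | Sum.inr _ => Iso.refl _)
    (by
      rintro (c | d) (c' | d') f
      · rfl
      · rfl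
      · exact f.elim
      · rfl)

variable (K)

def toCollageFunctor : ProfInstance K ⥤ (Collage K ⥤ Type u) where
  obj := toFunctor
  map {I J} f :=
    { app
        | Sum.inl c => f.1.1.app c
        | Sum.inr d => f.1.2.app d
      naturality := by
        rintro (c | d) (c' | d') g
        · exact f.1.1.naturality g
        · ext x; exact f.2 x g
        · exact g.elim
        · exact f.1.2.naturality g }
  map_id I := by ext (c | d) <;> rfl
  map_comp f g := by ext (c | d) <;> rfl

def ofCollageFunctor : (Collage K ⥤ Type u) ⥤ ProfInstance K where
  obj := ofFunctor
  map α := ⟨(Functor.whiskerLeft (Collage.inl K) α, Functor.whiskerLeft (Collage.inr K) α),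
    fun x k => NatTrans.naturality_apply α (Collage.hetHom k) x⟩

def equivCollageFunctors : ProfInstance K ≌ (Collage K ⥤ Type u) :=
  .mk (toCollageFunctor K) (ofCollageFunctor K)
    (NatIso.ofComponents Iso.refl fun _ => rfl)
    (NatIso.ofComponents toFunctorOfFunctorIso fun _ => by ext (_ | _) <;> rfl)

end ProfInstance

/-- For every profunctor `K` from `C` to `D`, the category of instances of `K` is equivalent
to the category of functors from the collage of `K` to `Type`. -/
theorem profInstances_equiv_collageFunctors (K : Cᵒᵖ × D ⥤ Type u) :
    Nonempty (ProfInstance K ≌ (Collage K ⥤ Type u)) :=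
  ⟨ProfInstance.equivCollageFunctors K⟩
end

section
/- Let K be a profunctor from C to D, L a profunctor from C' to D', and (F, H, ψ) a strict morphism from K to L, i.e. functors F : C ⥤ C', H : D ⥤ D' and functions ψ : K(c,d) → L(F.obj c, H.obj d) natural in c and d. Then the restriction functor from the category of instances of L to the category of instances of K, sending (X, Y, β) to (F ⋙ X, H ⋙ Y, (x,k) ↦ β x (ψ k)) and acting on morphisms by whiskering, admits both a left adjoint and a right adjoint. -/
open CategoryTheory Opposite

universe u

variable {C D C' D' : Type u} [Category.{u} C] [Category.{u} D]
  [Category.{u} C'] [Category.{u} D']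

/-- Restriction of instances along a strict morphism `(F, H, ψ)` of profunctors from `K` to
`L`, sending `(X, Y, β)` to `(F ⋙ X, H ⋙ Y, (x, k) ↦ β x (ψ k))` and acting on morphisms by
whiskering. -/
def restrictProfInstance (K : Cᵒᵖ × D ⥤ Type u) (L : C'ᵒᵖ × D' ⥤ Type u)
    (F : C ⥤ C') (H : D ⥤ D')
    (ψ : ∀ (c : C) (d : D), K.obj (op c, d) → L.obj (op (F.obj c), H.obj d))
    (hψ : ∀ {c₂ c₁ : C} {d₁ d₂ : D} (f : c₂ ⟶ c₁) (g : d₁ ⟶ d₂) (k : K.obj (op c₁, d₁)),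
      ψ c₂ d₂ (K.map (f.op, g) k) = L.map ((F.map f).op, H.map g) (ψ c₁ d₁ k)) :
    ProfInstance L ⥤ ProfInstance K where
  obj I :=
    { X := F ⋙ I.X
      Y := H ⋙ I.Y
      act := fun {c d} x k => I.act x (ψ c d k)
      act_map := fun {c d d'} g x k => by
        have h1 := I.act_map (H.map g) x (ψ c d k)
        have h2 := hψ (𝟙 c) g k
        rw [F.map_id] at h2
        show I.Y.map (H.map g) (I.act x (ψ c d k)) = I.act x (ψ c d' (K.map (𝟙 (op c), g) k))
        rw [h1]
        congr 1
        rw [show ((𝟙 c : c ⟶ c).op, g) = ((𝟙 (op c) : op c ⟶ op c), g) from rfl] at h2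
        rw [h2]
        rfl
      map_act := fun {c c' d} f x k => by
        have h1 := I.map_act (F.map f) x (ψ c' d k)
        have h2 := hψ f (𝟙 d) k
        rw [H.map_id] at h2
        show I.act (I.X.map (F.map f) x) (ψ c' d k) = I.act x (ψ c d (K.map (f.op, 𝟙 d) k))
        rw [h1, h2] }
  map {I J} f := ⟨(Functor.whiskerLeft F f.1.1, Functor.whiskerLeft H f.1.2),
    fun {c d} x k => f.2 x (ψ c d k)⟩
  map_id I := rfl
  map_comp f g := rfl

/-!
An instance of `K` is the same thing as a copresheaf on the collage of `K`. A strict morphism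
`(F, H, ψ)` induces a functor `Φ` between the collages, and under this equivalence restriction of
instances is (even definitionally) precomposition with `Φ`. Precomposition has a left and a right
adjoint, left and right Kan extension along `Φ`, because `Type u` is complete and cocomplete.
-/

section

variable (K : Cᵒᵖ × D ⥤ Type u)

abbrev profDimap {c c' : C} {d d' : D} (f : c' ⟶ c) (g : d ⟶ d') :
    K.obj (op c, d) → K.obj (op c', d') :=
  K.map ((f.op, g) : ((op c, d) : Cᵒᵖ × D) ⟶ (op c', d'))

lemma profDimap_profDimap {c c' c'' : C} {d d' d'' : D} (f : c' ⟶ c) (g : d ⟶ d')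
    (f' : c'' ⟶ c') (g' : d' ⟶ d'') (k : K.obj (op c, d)) :
    profDimap K f' g' (profDimap K f g k) = profDimap K (f' ≫ f) (g ≫ g') k :=
  (Functor.map_comp_apply K _ _ k).symm

lemma profDimap_id {c : C} {d : D} (k : K.obj (op c, d)) : profDimap K (𝟙 c) (𝟙 d) k = k :=
  Functor.map_id_apply K _ k

end

/-- The collage of `K`: the category on `C ⊕ D` in which the morphisms from `c` to `d` are the
elements of `K(c, d)` and there are none from `D` to `C`. -/
inductive ProfCollage (_K : Cᵒᵖ × D ⥤ Type u) : Type u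
  | inl : C → ProfCollage _K
  | inr : D → ProfCollage _K

namespace ProfCollage

variable (K : Cᵒᵖ × D ⥤ Type u)

def Hom : ProfCollage K → ProfCollage K → Type u
  | .inl c, .inl c' => c ⟶ c'
  | .inl c, .inr d => K.obj (op c, d)
  | .inr _, .inl _ => PEmpty
  | .inr d, .inr d' => d ⟶ d'

def id : ∀ a : ProfCollage K, Hom K a a
  | .inl c => 𝟙 c
  | .inr d => 𝟙 d

def comp : ∀ {a b c : ProfCollage K}, Hom K a b → Hom K b c → Hom K a c
  | .inl _, .inl _, .inl _, f, g => (f ≫ g : _ ⟶ _)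
  | .inl _, .inl _, .inr d, f, k => profDimap K f (𝟙 d) k
  | .inl a, .inr _, .inr _, k, g => profDimap K (𝟙 a) g k
  | .inr _, .inr _, .inr _, f, g => (f ≫ g : _ ⟶ _)
  | .inr _, .inl _, _, f, _ => (f : PEmpty).elim
  | .inl _, .inr _, .inl _, _, g => (g : PEmpty).elim
  | .inr _, .inr _, .inl _, _, g => (g : PEmpty).elim

instance : Category.{u} (ProfCollage K) where
  Hom := Hom K
  id := id K
  comp := comp K
  id_comp {a b} f := by
    rcases a with c | d <;> rcases b with c' | d' <;> dsimp only [Hom] at f ⊢ <;>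
      first | exact f.elim | simp [id, comp, profDimap_id]
  comp_id {a b} f := by
    rcases a with c | d <;> rcases b with c' | d' <;> dsimp only [Hom] at f ⊢ <;>
      first | exact f.elim | simp [id, comp, profDimap_id]
  assoc {a b c d} f g h := by
    rcases a with a | a <;> rcases b with b | b <;> rcases c with c | c <;>
      rcases d with d | d <;> dsimp only [Hom] at f g h ⊢ <;>
      first | exact f.elim | exact g.elim | exact h.elim | simp [comp, profDimap_profDimap]

variable {K}

def left : C ⥤ ProfCollage K where
  obj := inl
  map f := f

def right : D ⥤ ProfCollage K where
  obj := inr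
  map g := g

def het {c : C} {d : D} (k : K.obj (op c, d)) : (inl c : ProfCollage K) ⟶ inr d := k

variable {L : C'ᵒᵖ × D' ⥤ Type u} {F : C ⥤ C'} {H : D ⥤ D'}
  {ψ : ∀ (c : C) (d : D), K.obj (op c, d) → L.obj (op (F.obj c), H.obj d)}

lemma apply_profDimap_id_right
    (hψ : ∀ {c₂ c₁ : C} {d₁ d₂ : D} (f : c₂ ⟶ c₁) (g : d₁ ⟶ d₂) (k : K.obj (op c₁, d₁)),
      ψ c₂ d₂ (K.map (f.op, g) k) = L.map ((F.map f).op, H.map g) (ψ c₁ d₁ k))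
    {c c' : C} {d : D} (f : c' ⟶ c) (k : K.obj (op c, d)) :
    ψ c' d (profDimap K f (𝟙 d) k) = profDimap L (F.map f) (𝟙 (H.obj d)) (ψ c d k) := by
  rw [hψ, H.map_id]

lemma apply_profDimap_id_left
    (hψ : ∀ {c₂ c₁ : C} {d₁ d₂ : D} (f : c₂ ⟶ c₁) (g : d₁ ⟶ d₂) (k : K.obj (op c₁, d₁)),
      ψ c₂ d₂ (K.map (f.op, g) k) = L.map ((F.map f).op, H.map g) (ψ c₁ d₁ k))
    {c : C} {d d' : D} (g : d ⟶ d') (k : K.obj (op c, d)) :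
    ψ c d' (profDimap K (𝟙 c) g k) = profDimap L (𝟙 (F.obj c)) (H.map g) (ψ c d k) := by
  rw [hψ, F.map_id]

variable (F H ψ) in
def map (hψ : ∀ {c₂ c₁ : C} {d₁ d₂ : D} (f : c₂ ⟶ c₁) (g : d₁ ⟶ d₂) (k : K.obj (op c₁, d₁)),
      ψ c₂ d₂ (K.map (f.op, g) k) = L.map ((F.map f).op, H.map g) (ψ c₁ d₁ k)) :
    ProfCollage K ⥤ ProfCollage L where
  obj
    | .inl c => inl (F.obj c)
    | .inr d => inr (H.obj d)
  map {a b} f := match a, b, f with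
    | .inl _, .inl _, f => F.map f
    | .inl c, .inr d, k => ψ c d k
    | .inr _, .inr _, g => H.map g
    | .inr _, .inl _, f => (f : PEmpty).elim
  map_id a := by
    cases a
    · exact F.map_id _
    · exact H.map_id _
  map_comp {a b c} f g := by
    rcases a with a | a <;> rcases b with b | b <;> rcases c with c | c <;>
      first | exact (f : PEmpty).elim | exact (g : PEmpty).elim | skip
    · exact F.map_comp (f : a ⟶ b) g
    · exact apply_profDimap_id_right @hψ (f : a ⟶ b) (g : K.obj (op b, c))
    · exact apply_profDimap_id_left @hψ (g : b ⟶ c) (f : K.obj (op a, b))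
    · exact H.map_comp (f : a ⟶ b) g

end ProfCollage

namespace ProfInstance

variable {K : Cᵒᵖ × D ⥤ Type u}

def toCopresheaf (I : ProfInstance K) : ProfCollage K ⥤ Type u where
  obj
    | .inl c => I.X.obj c
    | .inr d => I.Y.obj d
  map {a b} f := match a, b, f with
    | .inl _, .inl _, f => I.X.map f
    | .inl _, .inr _, k => TypeCat.ofHom (fun x => I.act x k)
    | .inr _, .inr _, g => I.Y.map g
    | .inr _, .inl _, f => (f : PEmpty).elim
  map_id a := by
    cases a
    · exact I.X.map_id _
    · exact I.Y.map_id _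
  map_comp {a b c} f g := by
    rcases a with a | a <;> rcases b with b | b <;> rcases c with c | c <;>
      first | exact (f : PEmpty).elim | exact (g : PEmpty).elim | skip
    · exact I.X.map_comp (f : a ⟶ b) g
    · ext x
      exact (I.map_act f x g).symm
    · ext x
      exact (I.act_map g x f).symm
    · exact I.Y.map_comp (f : a ⟶ b) g

variable (K) in
def toCopresheafFunctor : ProfInstance K ⥤ (ProfCollage K ⥤ Type u) where
  obj := toCopresheaf
  map {I J} μ :=
    { app
        | .inl c => μ.1.1.app c
        | .inr d => μ.1.2.app d
      naturality {a b} f := by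
        rcases a with a | a <;> rcases b with b | b <;> try exact (f : PEmpty).elim
        · exact μ.1.1.naturality (f : a ⟶ b)
        · ext x
          exact μ.2 x f
        · exact μ.1.2.naturality (f : a ⟶ b) }
  map_id I := by
    ext a
    cases a <;> rfl
  map_comp f g := by
    ext a
    cases a <;> rfl

def ofCopresheaf (G : ProfCollage K ⥤ Type u) : ProfInstance K where
  X := ProfCollage.left ⋙ G
  Y := ProfCollage.right ⋙ G
  act x k := G.map (ProfCollage.het k) x
  act_map g x k := (G.map_comp_apply (ProfCollage.het k) (ProfCollage.right.map g) x).symm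
  map_act f x k := (G.map_comp_apply (ProfCollage.left.map f) (ProfCollage.het k) x).symm

variable (K) in
def ofCopresheafFunctor : (ProfCollage K ⥤ Type u) ⥤ ProfInstance K where
  obj := ofCopresheaf
  map η := ⟨(Functor.whiskerLeft ProfCollage.left η, Functor.whiskerLeft ProfCollage.right η),
    fun _ k => ConcreteCategory.congr_hom (η.naturality (ProfCollage.het k)) _⟩

variable (K) in
def equivCopresheaf : ProfInstance K ≌ (ProfCollage K ⥤ Type u) :=
  .mk (toCopresheafFunctor K) (ofCopresheafFunctor K)
    (NatIso.ofComponents (fun I => Iso.refl I))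
    (NatIso.ofComponents
      (fun G => NatIso.ofComponents (fun a => match a with
          | .inl c => Iso.refl (G.obj (.inl c))
          | .inr d => Iso.refl (G.obj (.inr d)))
        (fun {a b} f => by
          rcases a with a | a <;> rcases b with b | b <;> first | exact (f : PEmpty).elim | rfl))
      (fun η => by
        ext a
        rcases a with a | a <;> rfl))

end ProfInstance

def restrictProfInstanceIsoPrecomp (K : Cᵒᵖ × D ⥤ Type u) (L : C'ᵒᵖ × D' ⥤ Type u)
    (F : C ⥤ C') (H : D ⥤ D')
    (ψ : ∀ (c : C) (d : D), K.obj (op c, d) → L.obj (op (F.obj c), H.obj d))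
    (hψ : ∀ {c₂ c₁ : C} {d₁ d₂ : D} (f : c₂ ⟶ c₁) (g : d₁ ⟶ d₂) (k : K.obj (op c₁, d₁)),
      ψ c₂ d₂ (K.map (f.op, g) k) = L.map ((F.map f).op, H.map g) (ψ c₁ d₁ k)) :
    restrictProfInstance K L F H ψ @hψ ≅
      (ProfInstance.equivCopresheaf L).functor ⋙
        (Functor.whiskeringLeft _ _ (Type u)).obj (ProfCollage.map F H ψ @hψ) ⋙
        (ProfInstance.equivCopresheaf K).inverse :=
  Iso.refl _

/-- The restriction functor between instance categories induced by a strict morphism of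
profunctors admits both a left adjoint and a right adjoint. -/
theorem restrictProfInstance_isRightAdjoint_isLeftAdjoint
    (K : Cᵒᵖ × D ⥤ Type u) (L : C'ᵒᵖ × D' ⥤ Type u)
    (F : C ⥤ C') (H : D ⥤ D')
    (ψ : ∀ (c : C) (d : D), K.obj (op c, d) → L.obj (op (F.obj c), H.obj d))
    (hψ : ∀ {c₂ c₁ : C} {d₁ d₂ : D} (f : c₂ ⟶ c₁) (g : d₁ ⟶ d₂) (k : K.obj (op c₁, d₁)),
      ψ c₂ d₂ (K.map (f.op, g) k) = L.map ((F.map f).op, H.map g) (ψ c₁ d₁ k)) :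
    (restrictProfInstance K L F H ψ @hψ).IsRightAdjoint ∧
    (restrictProfInstance K L F H ψ @hψ).IsLeftAdjoint := by
  have := (Functor.lanAdjunction (ProfCollage.map F H ψ @hψ) (Type u)).isRightAdjoint
  have := (Functor.ranAdjunction (ProfCollage.map F H ψ @hψ) (Type u)).isLeftAdjoint
  exact ⟨Functor.isRightAdjoint_of_iso (restrictProfInstanceIsoPrecomp K L F H ψ @hψ).symm,
    Functor.isLeftAdjoint_of_iso (restrictProfInstanceIsoPrecomp K L F H ψ @hψ).symm⟩
end
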